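/- arXiv:2007.15623 — 2 statements merged into one kernel-verified Lean document; each statement's English description precedes it below -/
import Mathlib

section
/- For every compact set K ⊆ ℝ^d, every L ≥ 1 and every f ∈ W^L(K), there exists a sequence of finite ReLU networks f_n with L hidden layers such that ‖f_n‖_{W^L(K)} ≤ ‖f‖_{W^L(K)} for all n and f_n → f in C^{0,α}(K) for every α < 1. -/
open MeasureTheory Set Filter Topology
open scoped ENNReal NNReal Classical

noncomputable section

/-- The rectified linear unit. -/
def relu (z : ℝ) : ℝ := max z 0

/-- The Borel σ-algebra on `C(K, ℝ)` for the topology of uniform convergence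
(= compact-open topology for compact `K`). -/
instance ctsMeasurableSpace {d : ℕ} (K : Set (Fin d → ℝ)) : MeasurableSpace C(K, ℝ) := borel _

/-- `(μp, μn)` is a (Jordan-decomposed) signed-measure representation of `f` over the
class `H ⊆ C(K, ℝ)`: both parts are finite measures concentrated on `H`, and
`f x = ∫ relu (g x) dμp - ∫ relu (g x) dμn` for every `x ∈ K`. -/
def IsBarronRep {d : ℕ} (K : Set (Fin d → ℝ)) (H : Set C(K, ℝ)) (f : C(K, ℝ))
    (μp μn : Measure C(K, ℝ)) : Prop :=
  IsFiniteMeasure μp ∧ IsFiniteMeasure μn ∧ μp Hᶜ = 0 ∧ μn Hᶜ = 0 ∧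
    ∀ x : K, f x = (∫ g : C(K, ℝ), relu (g x) ∂μp) - ∫ g : C(K, ℝ), relu (g x) ∂μn

/-- The generalized Barron norm `‖f‖_{X,K}`, where `H` plays the role of the closed unit
ball `B^X` (realized inside `C(K,ℝ)`): the infimum of the total variation mass over all
signed-measure representations of `f`. -/
def barronNorm {d : ℕ} (K : Set (Fin d → ℝ)) (H : Set C(K, ℝ)) (f : C(K, ℝ)) : ℝ≥0∞ :=
  ⨅ p : {p : Measure C(K, ℝ) × Measure C(K, ℝ) // IsBarronRep K H f p.1 p.2},
    p.1.1 Set.univ + p.1.2 Set.univ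

/-- The neural tree norm `‖·‖_{W^L(K)}`. For `L = 0` it is the norm `‖w‖_{ℓ¹} + |b|` of the
space of affine functions `x ↦ wᵀx + b`; for `L ≥ 1`, `W^L(K) = B_{W^{L-1}(K), K}` is the
generalized Barron space modelled on `X = W^{L-1}(K)`, whose unit ball is
`{g : treeNorm K (L-1) g ≤ 1}`.  A continuous function `f` belongs to `W^L(K)` iff
`treeNorm K L f ≠ ∞`. -/
def treeNorm {d : ℕ} (K : Set (Fin d → ℝ)) : ℕ → C(K, ℝ) → ℝ≥0∞
  | 0, f =>
    ⨅ p : {p : (Fin d → ℝ) × ℝ //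
        ∀ x : K, f x = (∑ i : Fin d, p.1 i * (x : Fin d → ℝ) i) + p.2},
      ENNReal.ofReal ((∑ i : Fin d, |p.1.1 i|) + |p.1.2|)
  | (L + 1), f => barronNorm K {g : C(K, ℝ) | treeNorm K L g ≤ 1} f

/-- Hidden unit values of a fully connected ReLU network: `hiddenLayer d m a x ℓ j` is the
output of the `j`-th unit in the `(ℓ+1)`-th hidden layer (of width `m (ℓ+1)`), on input `x`
(with the convention `x_{d+1} = 1` handled by the bias weight `a 0 j d`). -/
def hiddenLayer (d : ℕ) (m : ℕ → ℕ) (a : ℕ → ℕ → ℕ → ℝ) (x : Fin d → ℝ) : ℕ → ℕ → ℝ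
  | 0, j => relu ((∑ i : Fin d, a 0 j i.val * x i) + a 0 j d)
  | (ℓ + 1), j => relu (∑ i ∈ Finset.range (m (ℓ + 1)), a (ℓ + 1) j i * hiddenLayer d m a x ℓ i)

/-- Realization of a finite fully connected ReLU network with `L ≥ 1` hidden layers,
hidden-layer widths `m 1, …, m L`, outer coefficients `c` and weights `a`. -/
def netRealize (d L : ℕ) (m : ℕ → ℕ) (c : ℕ → ℝ) (a : ℕ → ℕ → ℕ → ℝ) (x : Fin d → ℝ) : ℝ :=
  ∑ i ∈ Finset.range (m L), c i * hiddenLayer d m a x (L - 1) i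

/-- Sum over all paths below a given hidden unit of the products of absolute weights. -/
def pathBelow (d : ℕ) (m : ℕ → ℕ) (a : ℕ → ℕ → ℕ → ℝ) : ℕ → ℕ → ℝ
  | 0, j => ∑ i ∈ Finset.range (d + 1), |a 0 j i|
  | (ℓ + 1), j => ∑ i ∈ Finset.range (m (ℓ + 1)), |a (ℓ + 1) j i| * pathBelow d m a ℓ i

/-- The path-norm proxy `Σ_{i_L,…,i_0} |a^L_{i_L} a^{L-1}_{i_L i_{L-1}} ⋯ a⁰_{i_1 i_0}|`
of a finite ReLU network with `L ≥ 1` hidden layers. -/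
def pathProxy (d L : ℕ) (m : ℕ → ℕ) (c : ℕ → ℝ) (a : ℕ → ℕ → ℕ → ℝ) : ℝ :=
  ∑ i ∈ Finset.range (m L), |c i| * pathBelow d m a (L - 1) i

/-- The Hölder norm `‖u‖_{C^{0,α}(K)} = ‖u‖_{C⁰(K)} + [u]_{C^{0,α}(K)}` (valued in `ℝ≥0∞`),
for functions on `K ⊆ ℝ^d` with the `ℓ∞` norm on `ℝ^d`. -/
def holderNorm {d : ℕ} (K : Set (Fin d → ℝ)) (α : ℝ) (u : K → ℝ) : ℝ≥0∞ :=
  (⨆ x : K, (‖u x‖₊ : ℝ≥0∞)) +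
    ⨆ x : K, ⨆ y : K, if x = y then 0 else (‖u x - u y‖₊ : ℝ≥0∞) / edist x y ^ α

end

/-!
The proof is by induction on the depth. Every member of the unit ball of `W^ℓ(K)` is bounded
and `1`-Lipschitz on `K` (and every `f ∈ W^ℓ(K)` is `‖f‖`-Lipschitz), so a Barron integral
`f = ∫ σ(g) dμ(g)` over that ball can be discretized: rounding the values of `g` to the grid
`δℤ` at the points of a finite `δ`-net of `K` cuts the ball into finitely many measurable cells
on which all members are uniformly `3δ`-close, and replacing `μ` by the masses of the cells,
each placed at one member of the cell, gives a finite sum `Σ eᵢ σ(gᵢ)` uniformly close to `f`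
with `Σ |eᵢ| ≤ ‖f‖ + η`. Each `gᵢ` is approximated by a network from the induction hypothesis,
these networks are run in parallel below one new ReLU layer, and the coefficients are shrunk by
`‖f‖ / (‖f‖ + η)` to get the norm bound exactly. Uniform convergence together with a uniform
Lipschitz bound gives convergence in `C^{0,α}` by the interpolation
`|u x - u y| ≤ (2 ‖u‖_∞)^(1-α) (Lip(u) |x - y|)^α`.
-/

section

variable {d : ℕ} {K : Set (Fin d → ℝ)}

lemma relu_nonneg (a : ℝ) : 0 ≤ relu a := le_max_right _ _

lemma abs_relu_le (a : ℝ) : |relu a| ≤ |a| := by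
  rw [abs_of_nonneg (relu_nonneg a)]
  exact max_le (le_abs_self a) (abs_nonneg a)

lemma abs_relu_sub_relu_le (a b : ℝ) : |relu a - relu b| ≤ |a - b| :=
  abs_max_sub_max_le_abs a b 0

lemma continuous_relu : Continuous relu := continuous_id.max continuous_const

instance : BorelSpace C(K, ℝ) := ⟨rfl⟩

lemma measurable_relu_eval (x : K) : Measurable fun g : C(K, ℝ) => relu (g x) :=
  (continuous_relu.comp (continuous_eval_const x)).measurable

lemma le_toReal_mul_of_forall_lt_ofReal {t : ℝ≥0∞} (ht : t ≠ ⊤) {A C : ℝ}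
    (h : ∀ s : ℝ, t < ENNReal.ofReal s → A ≤ s * C) : A ≤ t.toReal * C := by
  refine ge_of_tendsto (((continuous_mul_const C).tendsto t.toReal).mono_left
    (nhdsWithin_le_nhds (s := Ioi t.toReal))) ?_
  filter_upwards [self_mem_nhdsWithin] with s hs
  exact h s ((ENNReal.lt_ofReal_iff_toReal_lt ht).2 hs)

lemma abs_integral_sub_integral_le {X : Type*} [MeasurableSpace X] {μp μn : Measure X}
    [IsFiniteMeasure μp] [IsFiniteMeasure μn] {φ : X → ℝ} {c : ℝ}
    (hp : ∀ᵐ g ∂μp, |φ g| ≤ c) (hn : ∀ᵐ g ∂μn, |φ g| ≤ c) :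
    |(∫ g, φ g ∂μp) - ∫ g, φ g ∂μn| ≤ (μp univ + μn univ).toReal * c := by
  rw [ENNReal.toReal_add (measure_ne_top _ _) (measure_ne_top _ _), add_mul]
  calc |(∫ g, φ g ∂μp) - ∫ g, φ g ∂μn| ≤ ‖∫ g, φ g ∂μp‖ + ‖∫ g, φ g ∂μn‖ := abs_sub _ _
    _ ≤ _ := by
      rw [mul_comm (μp univ).toReal, mul_comm (μn univ).toReal]
      exact add_le_add (norm_integral_le_of_norm_le_const hp)
        (norm_integral_le_of_norm_le_const hn)

def BoundedLipschitzClass (R : ℝ) (H : Set C(K, ℝ)) : Prop :=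
  ∀ g ∈ H, (∀ x, |g x| ≤ R) ∧ LipschitzWith 1 g

lemma integrable_relu_eval {R : ℝ} {H : Set C(K, ℝ)} {μ : Measure C(K, ℝ)} [IsFiniteMeasure μ]
    (hμ : ∀ᵐ g ∂μ, g ∈ H) (hH : BoundedLipschitzClass R H) (x : K) :
    Integrable (fun g : C(K, ℝ) => relu (g x)) μ :=
  (integrable_const R).mono' (measurable_relu_eval x).aestronglyMeasurable <|
    hμ.mono fun g hg => (abs_relu_le _).trans ((hH g hg).1 x)

namespace IsBarronRep

variable {H : Set C(K, ℝ)} {f : C(K, ℝ)} {μp μn : Measure C(K, ℝ)}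

lemma ae_mem_left (h : IsBarronRep K H f μp μn) : ∀ᵐ g ∂μp, g ∈ H := ae_iff.2 h.2.2.1

lemma ae_mem_right (h : IsBarronRep K H f μp μn) : ∀ᵐ g ∂μn, g ∈ H := ae_iff.2 h.2.2.2.1

lemma abs_le {R : ℝ} (h : IsBarronRep K H f μp μn) (hH : BoundedLipschitzClass R H) (x : K) :
    |f x| ≤ (μp univ + μn univ).toReal * R := by
  have := h.1; have := h.2.1
  have hφ : ∀ g ∈ H, |relu (g x)| ≤ R := fun g hg => (abs_relu_le _).trans ((hH g hg).1 x)
  rw [h.2.2.2.2 x]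
  exact abs_integral_sub_integral_le (h.ae_mem_left.mono hφ) (h.ae_mem_right.mono hφ)

lemma dist_le {R : ℝ} (h : IsBarronRep K H f μp μn) (hH : BoundedLipschitzClass R H)
    (x y : K) : dist (f x) (f y) ≤ (μp univ + μn univ).toReal * dist x y := by
  have := h.1; have := h.2.1
  have hφ : ∀ g ∈ H, |relu (g x) - relu (g y)| ≤ dist x y := fun g hg =>
    (abs_relu_sub_relu_le _ _).trans (by simpa [Real.dist_eq] using (hH g hg).2.dist_le_mul x y)
  have hsplit : ∀ μ : Measure C(K, ℝ), IsFiniteMeasure μ → (∀ᵐ g ∂μ, g ∈ H) →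
      (∫ g, relu (g x) ∂μ) - ∫ g, relu (g y) ∂μ = ∫ g, (relu (g x) - relu (g y)) ∂μ :=
    fun μ _ hμ => (integral_sub (integrable_relu_eval hμ hH x) (integrable_relu_eval hμ hH y)).symm
  rw [Real.dist_eq, h.2.2.2.2 x, h.2.2.2.2 y, sub_sub_sub_comm, hsplit μp ‹_› h.ae_mem_left,
    hsplit μn ‹_› h.ae_mem_right]
  exact abs_integral_sub_integral_le (h.ae_mem_left.mono hφ) (h.ae_mem_right.mono hφ)

end IsBarronRep

lemma exists_isBarronRep_of_barronNorm_lt {H : Set C(K, ℝ)} {f : C(K, ℝ)} {s : ℝ≥0∞}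
    (h : barronNorm K H f < s) :
    ∃ μp μn, IsBarronRep K H f μp μn ∧ μp univ + μn univ < s := by
  obtain ⟨⟨⟨μp, μn⟩, hrep⟩, hlt⟩ := iInf_lt_iff.mp h
  exact ⟨μp, μn, hrep, hlt⟩

lemma barronNorm_bounds {R : ℝ} (hR : 0 ≤ R) {H : Set C(K, ℝ)} (hH : BoundedLipschitzClass R H)
    {f : C(K, ℝ)} (hf : barronNorm K H f ≠ ⊤) :
    (∀ x, |f x| ≤ (barronNorm K H f).toReal * R) ∧
      LipschitzWith (barronNorm K H f).toNNReal f := by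
  have hmass : ∀ s : ℝ, barronNorm K H f < ENNReal.ofReal s →
      ∃ μp μn, IsBarronRep K H f μp μn ∧ (μp univ + μn univ).toReal ≤ s := fun s hs => by
    obtain ⟨μp, μn, hrep, hlt⟩ := exists_isBarronRep_of_barronNorm_lt hs
    exact ⟨μp, μn, hrep, (ENNReal.toReal_lt_of_lt_ofReal hlt).le⟩
  refine ⟨fun x => le_toReal_mul_of_forall_lt_ofReal hf fun s hs => ?_,
    LipschitzWith.of_dist_le_mul fun x y =>
      le_toReal_mul_of_forall_lt_ofReal hf fun s hs => ?_⟩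
  · obtain ⟨μp, μn, hrep, hle⟩ := hmass s hs
    exact (hrep.abs_le hH x).trans (mul_le_mul_of_nonneg_right hle hR)
  · obtain ⟨μp, μn, hrep, hle⟩ := hmass s hs
    exact (hrep.dist_le hH x y).trans (mul_le_mul_of_nonneg_right hle dist_nonneg)

lemma exists_affine_of_treeNorm_zero_lt {f : C(K, ℝ)} {s : ℝ≥0∞} (h : treeNorm K 0 f < s) :
    ∃ (w : Fin d → ℝ) (b : ℝ), (∀ x : K, f x = (∑ i, w i * (x : Fin d → ℝ) i) + b) ∧
      ENNReal.ofReal ((∑ i, |w i|) + |b|) < s := by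
  rw [treeNorm] at h
  obtain ⟨⟨⟨w, b⟩, hrep⟩, hlt⟩ := iInf_lt_iff.mp h
  exact ⟨w, b, hrep, hlt⟩

lemma abs_sum_mul_le (w x : Fin d → ℝ) : |∑ i, w i * x i| ≤ (∑ i, |w i|) * ‖x‖ := by
  rw [Finset.sum_mul]
  refine (Finset.abs_sum_le_sum_abs _ _).trans (Finset.sum_le_sum fun i _ => ?_)
  rw [abs_mul]
  exact mul_le_mul_of_nonneg_left (norm_le_pi_norm x i) (abs_nonneg _)

lemma abs_affine_le {R : ℝ} (hR1 : 1 ≤ R) (w x : Fin d → ℝ) (b : ℝ) (hx : ‖x‖ ≤ R) :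
    |(∑ i, w i * x i) + b| ≤ ((∑ i, |w i|) + |b|) * R := by
  calc |(∑ i, w i * x i) + b| ≤ (∑ i, |w i|) * ‖x‖ + |b| :=
        (abs_add_le _ _).trans (add_le_add_left (abs_sum_mul_le w x) _)
    _ ≤ (∑ i, |w i|) * R + |b| * R := by gcongr; exact le_mul_of_one_le_right (abs_nonneg b) hR1
    _ = _ := by ring

lemma dist_affine_le (w x y : Fin d → ℝ) (b : ℝ) :
    dist ((∑ i, w i * x i) + b) ((∑ i, w i * y i) + b) ≤ ((∑ i, |w i|) + |b|) * dist x y := by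
  rw [Real.dist_eq, add_sub_add_right_eq_sub, ← Finset.sum_sub_distrib, dist_eq_norm]
  simp_rw [← mul_sub]
  exact (abs_sum_mul_le w (x - y)).trans
    (mul_le_mul_of_nonneg_right (le_add_of_nonneg_right (abs_nonneg b)) (norm_nonneg _))

lemma treeNorm_zero_bounds {R : ℝ} (hR1 : 1 ≤ R) (hR : ∀ x : K, ‖(x : Fin d → ℝ)‖ ≤ R)
    {f : C(K, ℝ)} (hf : treeNorm K 0 f ≠ ⊤) :
    (∀ x, |f x| ≤ (treeNorm K 0 f).toReal * R) ∧ LipschitzWith (treeNorm K 0 f).toNNReal f := by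
  have hrep : ∀ s : ℝ, treeNorm K 0 f < ENNReal.ofReal s → ∃ (w : Fin d → ℝ) (b : ℝ),
      (∀ x : K, f x = (∑ i, w i * (x : Fin d → ℝ) i) + b) ∧ (∑ i, |w i|) + |b| ≤ s :=
    fun s hs => by
      obtain ⟨w, b, hwb, hlt⟩ := exists_affine_of_treeNorm_zero_lt hs
      exact ⟨w, b, hwb, (ENNReal.ofReal_lt_ofReal_iff'.1 hlt).1.le⟩
  refine ⟨fun x => le_toReal_mul_of_forall_lt_ofReal hf fun s hs => ?_,
    LipschitzWith.of_dist_le_mul fun x y => le_toReal_mul_of_forall_lt_ofReal hf fun s hs => ?_⟩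
  · obtain ⟨w, b, hwb, hle⟩ := hrep s hs
    rw [hwb x]
    exact (abs_affine_le hR1 w x b (hR x)).trans
      (mul_le_mul_of_nonneg_right hle (zero_le_one.trans hR1))
  · obtain ⟨w, b, hwb, hle⟩ := hrep s hs
    rw [hwb x, hwb y]
    exact (dist_affine_le w x y b).trans (mul_le_mul_of_nonneg_right hle dist_nonneg)

lemma boundedLipschitzClass_unitBall_of_bounds {R : ℝ} (hR0 : 0 ≤ R) {ℓ : ℕ}
    (hℓ : ∀ f : C(K, ℝ), treeNorm K ℓ f ≠ ⊤ →
      (∀ x, |f x| ≤ (treeNorm K ℓ f).toReal * R) ∧ LipschitzWith (treeNorm K ℓ f).toNNReal f) :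
    BoundedLipschitzClass R {g : C(K, ℝ) | treeNorm K ℓ g ≤ 1} := fun g hg => by
  have hle : (treeNorm K ℓ g).toReal ≤ 1 :=
    ENNReal.toReal_le_of_le_ofReal zero_le_one (by simpa using hg)
  obtain ⟨hbd, hlip⟩ := hℓ g (ne_top_of_le_ne_top ENNReal.one_ne_top hg)
  exact ⟨fun x => (hbd x).trans (mul_le_of_le_one_left hR0 hle),
    hlip.weaken (by simpa using ENNReal.toNNReal_mono ENNReal.one_ne_top hg)⟩

lemma treeNorm_bounds {R : ℝ} (hR1 : 1 ≤ R) (hR : ∀ x : K, ‖(x : Fin d → ℝ)‖ ≤ R) (ℓ : ℕ)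
    {f : C(K, ℝ)} (hf : treeNorm K ℓ f ≠ ⊤) :
    (∀ x, |f x| ≤ (treeNorm K ℓ f).toReal * R) ∧ LipschitzWith (treeNorm K ℓ f).toNNReal f := by
  induction ℓ generalizing f with
  | zero => exact treeNorm_zero_bounds hR1 hR hf
  | succ ℓ ih =>
    exact barronNorm_bounds (zero_le_one.trans hR1)
      (boundedLipschitzClass_unitBall_of_bounds (zero_le_one.trans hR1) fun g hg => ih hg) hf

lemma boundedLipschitzClass_unitBall {R : ℝ} (hR1 : 1 ≤ R)
    (hR : ∀ x : K, ‖(x : Fin d → ℝ)‖ ≤ R) (ℓ : ℕ) :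
    BoundedLipschitzClass R {g : C(K, ℝ) | treeNorm K ℓ g ≤ 1} :=
  boundedLipschitzClass_unitBall_of_bounds (zero_le_one.trans hR1) fun _ hg =>
    treeNorm_bounds hR1 hR ℓ hg

def reluSum {ι : Type*} [Fintype ι] (e : ι → ℝ) (h : ι → C(K, ℝ)) : C(K, ℝ) where
  toFun x := ∑ i, e i * relu (h i x)
  continuous_toFun :=
    continuous_finsetSum _ fun i _ => continuous_const.mul (continuous_relu.comp (h i).continuous)

@[simp] lemma reluSum_apply {ι : Type*} [Fintype ι] (e : ι → ℝ) (h : ι → C(K, ℝ)) (x : K) :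
    reluSum e h x = ∑ i, e i * relu (h i x) := rfl

noncomputable def diracSum {X ι : Type*} [MeasurableSpace X] [Fintype ι] (c : ι → ℝ)
    (h : ι → X) : Measure X :=
  ∑ i, ENNReal.ofReal (c i) • Measure.dirac (h i)

section diracSum

variable {X ι : Type*} [MeasurableSpace X] [Fintype ι]
  (c : ι → ℝ) (h : ι → X)

lemma diracSum_apply_univ : diracSum c h univ = ∑ i, ENNReal.ofReal (c i) := by
  simp [diracSum]

instance : IsFiniteMeasure (diracSum c h) :=
  ⟨by simp [diracSum_apply_univ, ENNReal.sum_lt_top]⟩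

lemma diracSum_compl_eq_zero [MeasurableSingletonClass X] {H : Set X} (hh : ∀ i, h i ∈ H) :
    diracSum c h Hᶜ = 0 := by
  simp [diracSum, hh]

lemma integral_diracSum [MeasurableSingletonClass X] (φ : X → ℝ) :
    ∫ g, φ g ∂diracSum c h = ∑ i, max (c i) 0 * φ (h i) := by
  rw [diracSum, integral_finsetSum_measure fun i _ =>
    (integrable_dirac enorm_lt_top).smul_measure ENNReal.ofReal_ne_top]
  simp [integral_smul_measure, ENNReal.toReal_ofReal']

end diracSum

lemma treeNorm_reluSum_le {ι : Type*} [Fintype ι] {ℓ : ℕ} (e : ι → ℝ) {h : ι → C(K, ℝ)}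
    (hh : ∀ i, treeNorm K ℓ (h i) ≤ 1) :
    treeNorm K (ℓ + 1) (reluSum e h) ≤ ENNReal.ofReal (∑ i, |e i|) := by
  have hrep : IsBarronRep K {g | treeNorm K ℓ g ≤ 1} (reluSum e h)
      (diracSum e h) (diracSum (-e) h) :=
    ⟨inferInstance, inferInstance, diracSum_compl_eq_zero _ _ hh,
      diracSum_compl_eq_zero _ _ hh, fun x => by
        simp only [reluSum_apply, integral_diracSum, ← Finset.sum_sub_distrib, ← sub_mul,
          Pi.neg_apply, max_zero_sub_max_neg_zero_eq_self]⟩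
  refine (iInf_le_of_le ⟨(diracSum e h, diracSum (-e) h), hrep⟩ le_rfl).trans_eq ?_
  simp only [diracSum_apply_univ, ← Finset.sum_add_distrib, Pi.neg_apply]
  rw [ENNReal.ofReal_sum_of_nonneg fun i _ => abs_nonneg _]
  refine Finset.sum_congr rfl fun i _ => ?_
  rcases le_total 0 (e i) with hi | hi
  · rw [abs_of_nonneg hi, ENNReal.ofReal_of_nonpos (neg_nonpos.2 hi), add_zero]
  · rw [abs_of_nonpos hi, ENNReal.ofReal_of_nonpos hi, zero_add]

section FiniteFibers

variable {X α : Type*} [MeasurableSpace X] {μ : Measure X} {Φ : X → α} {S : Finset α}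

lemma ae_eq_sum_indicator_comp (hS : ∀ᵐ g ∂μ, Φ g ∈ S) (F : α → ℝ) :
    (fun g => F (Φ g)) =ᵐ[μ] fun g => ∑ v ∈ S, (Φ ⁻¹' {v}).indicator (fun _ => F v) g := by
  filter_upwards [hS] with g hg
  simp [Set.indicator_apply, hg]

variable [MeasurableSpace α] [MeasurableSingletonClass α]

lemma integrable_comp_of_ae_mem [IsFiniteMeasure μ] (hΦ : Measurable Φ)
    (hS : ∀ᵐ g ∂μ, Φ g ∈ S) (F : α → ℝ) : Integrable (fun g => F (Φ g)) μ :=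
  (integrable_finsetSum S fun v _ =>
    (integrable_const (F v)).indicator (hΦ (measurableSet_singleton v))).congr
      (ae_eq_sum_indicator_comp hS F).symm

lemma integral_comp_of_ae_mem [IsFiniteMeasure μ] (hΦ : Measurable Φ)
    (hS : ∀ᵐ g ∂μ, Φ g ∈ S) (F : α → ℝ) :
    ∫ g, F (Φ g) ∂μ = ∑ v ∈ S, μ.real (Φ ⁻¹' {v}) * F v := by
  rw [integral_congr_ae (ae_eq_sum_indicator_comp hS F), integral_finsetSum S fun v _ =>
    (integrable_const (F v)).indicator (hΦ (measurableSet_singleton v))]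
  exact Finset.sum_congr rfl fun v _ => integral_indicator_const _ (hΦ (measurableSet_singleton v))

lemma abs_integral_sub_sum_le [IsFiniteMeasure μ] (hΦ : Measurable Φ)
    (hS : ∀ᵐ g ∂μ, Φ g ∈ S) {φ : X → ℝ} (hφ : Integrable φ μ) {F : α → ℝ} {η : ℝ}
    (hF : ∀ᵐ g ∂μ, |φ g - F (Φ g)| ≤ η) :
    |(∫ g, φ g ∂μ) - ∑ v ∈ S, μ.real (Φ ⁻¹' {v}) * F v| ≤ η * μ.real univ := by
  rw [← integral_comp_of_ae_mem hΦ hS, ← integral_sub hφ (integrable_comp_of_ae_mem hΦ hS F)]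
  exact norm_integral_le_of_norm_le_const (f := fun g => φ g - F (Φ g)) hF

end FiniteFibers

namespace IsBarronRep

variable {H : Set C(K, ℝ)} {f : C(K, ℝ)} {μp μn : Measure C(K, ℝ)} {α : Type*}
  [MeasurableSpace α] [MeasurableSingletonClass α] {Φ : C(K, ℝ) → α} {S : Finset α}

lemma sum_abs_sub_le (h : IsBarronRep K H f μp μn) (hΦ : Measurable Φ)
    (hS : ∀ g ∈ H, Φ g ∈ S) :
    ∑ v ∈ S, |μp.real (Φ ⁻¹' {v}) - μn.real (Φ ⁻¹' {v})| ≤ (μp univ + μn univ).toReal := by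
  have := h.1; have := h.2.1
  have hmass : ∀ μ : Measure C(K, ℝ), IsFiniteMeasure μ → (∀ᵐ g ∂μ, g ∈ H) →
      ∑ v ∈ S, μ.real (Φ ⁻¹' {v}) = μ.real univ := fun μ _ hμ => by
    simpa using (integral_comp_of_ae_mem hΦ (hμ.mono hS) fun _ => (1 : ℝ)).symm
  rw [ENNReal.toReal_add (measure_ne_top _ _) (measure_ne_top _ _), ← measureReal_def,
    ← measureReal_def, ← hmass μp ‹_› h.ae_mem_left, ← hmass μn ‹_› h.ae_mem_right,
    ← Finset.sum_add_distrib]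
  exact Finset.sum_le_sum fun v _ => (abs_sub _ _).trans_eq (by simp [abs_of_nonneg])

lemma abs_sub_sum_le {R η : ℝ} (h : IsBarronRep K H f μp μn) (hH : BoundedLipschitzClass R H)
    (hΦ : Measurable Φ) (hS : ∀ g ∈ H, Φ g ∈ S) {rep : α → C(K, ℝ)}
    (hrep : ∀ g ∈ H, ∀ x, |g x - rep (Φ g) x| ≤ η) (x : K) :
    |f x - ∑ v ∈ S, (μp.real (Φ ⁻¹' {v}) - μn.real (Φ ⁻¹' {v})) * relu (rep v x)| ≤
      η * (μp univ + μn univ).toReal := by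
  have := h.1; have := h.2.1
  have happrox : ∀ μ : Measure C(K, ℝ), IsFiniteMeasure μ → (∀ᵐ g ∂μ, g ∈ H) →
      |(∫ g, relu (g x) ∂μ) - ∑ v ∈ S, μ.real (Φ ⁻¹' {v}) * relu (rep v x)| ≤ η * μ.real univ :=
    fun μ _ hμ => abs_integral_sub_sum_le hΦ (hμ.mono hS) (integrable_relu_eval hμ hH x)
      (hμ.mono fun g hg => (abs_relu_sub_relu_le _ _).trans (hrep g hg x))
  have hsplit : f x - ∑ v ∈ S, (μp.real (Φ ⁻¹' {v}) - μn.real (Φ ⁻¹' {v})) * relu (rep v x) =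
      ((∫ g, relu (g x) ∂μp) - ∑ v ∈ S, μp.real (Φ ⁻¹' {v}) * relu (rep v x)) -
        ((∫ g, relu (g x) ∂μn) - ∑ v ∈ S, μn.real (Φ ⁻¹' {v}) * relu (rep v x)) := by
    rw [h.2.2.2.2 x]
    simp only [sub_mul, Finset.sum_sub_distrib]
    ring
  rw [hsplit, ENNReal.toReal_add (measure_ne_top _ _) (measure_ne_top _ _), mul_add]
  exact (abs_sub _ _).trans (add_le_add (happrox μp ‹_› h.ae_mem_left)
    (happrox μn ‹_› h.ae_mem_right))

end IsBarronRep

lemma exists_finset_dist_lt {X : Type*} [PseudoMetricSpace X] [CompactSpace X] {δ : ℝ}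
    (hδ : 0 < δ) : ∃ T : Finset X, ∀ x, ∃ y ∈ T, dist x y < δ := by
  obtain ⟨t, -, ht, hcover⟩ :=
    Metric.finite_approx_of_totallyBounded (isCompact_univ (X := X)).totallyBounded δ hδ
  refine ⟨ht.toFinset, fun x => ?_⟩
  obtain ⟨y, hy, hxy⟩ := mem_iUnion₂.1 (hcover (mem_univ x))
  exact ⟨y, ht.mem_toFinset.2 hy, hxy⟩

/-- The fibres of this map are the cells on which a Barron measure is discretized. -/
noncomputable def floorGrid (T : Finset K) (δ : ℝ) (g : C(K, ℝ)) : T → ℤ := fun y => ⌊g y / δ⌋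

lemma measurable_floorGrid (T : Finset K) (δ : ℝ) : Measurable (floorGrid T δ) :=
  measurable_pi_lambda _ fun y =>
    Int.measurable_floor.comp ((continuous_eval_const (y : K)).measurable.div_const δ)

lemma finite_floorGrid_image {R δ : ℝ} (hδ : 0 < δ) (T : Finset K) {H : Set C(K, ℝ)}
    (hH : ∀ g ∈ H, ∀ x, |g x| ≤ R) : (floorGrid T δ '' H).Finite := by
  refine (Fintype.piFinset fun _ : T => Finset.Icc ⌊-R / δ⌋ ⌊R / δ⌋).finite_toSet.subset ?_
  rintro _ ⟨g, hg, rfl⟩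
  simp only [Finset.mem_coe, Fintype.mem_piFinset, Finset.mem_Icc]
  intro y
  obtain ⟨hlo, hhi⟩ := abs_le.1 (hH g hg y)
  exact ⟨Int.floor_le_floor (div_le_div_of_nonneg_right hlo hδ.le),
    Int.floor_le_floor (div_le_div_of_nonneg_right hhi hδ.le)⟩

lemma abs_sub_le_of_floorGrid_eq {δ : ℝ} (hδ : 0 < δ) {T : Finset K}
    (hT : ∀ x, ∃ y ∈ T, dist x y < δ) {g g' : C(K, ℝ)} (hg : LipschitzWith 1 g)
    (hg' : LipschitzWith 1 g') (h : floorGrid T δ g = floorGrid T δ g') (x : K) :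
    |g x - g' x| ≤ 3 * δ := by
  obtain ⟨y, hy, hxy⟩ := hT x
  have hgrid : |g y - g' y| < δ := by
    have := Int.abs_sub_lt_one_of_floor_eq_floor (congr_fun h ⟨y, hy⟩)
    rwa [← sub_div, abs_div, abs_of_pos hδ, div_lt_one hδ] at this
  have hlip : ∀ u : C(K, ℝ), LipschitzWith 1 u → |u x - u y| ≤ δ := fun u hu => by
    rw [← Real.dist_eq]
    exact (hu.dist_le_mul x y).trans (by simpa using hxy.le)
  calc |g x - g' x| = |(g x - g y) + (g y - g' y) + (g' y - g' x)| := by ring_nf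
    _ ≤ |g x - g y| + |g y - g' y| + |g' y - g' x| := abs_add_three _ _ _
    _ ≤ 3 * δ := by linarith [hlip g hg, hlip g' hg', abs_sub_comm (g' y) (g' x)]

lemma sum_fin_equivFin_symm {α M : Type*} [AddCommMonoid M] (S : Finset α) (F : α → M) :
    ∑ i : Fin S.card, F (S.equivFin.symm i) = ∑ v ∈ S, F v :=
  (Equiv.sum_comp S.equivFin.symm fun v : S => F v).trans (Finset.sum_coe_sort S F)

lemma exists_reluSum_approx_of_barronNorm_lt (hK : IsCompact K) {R : ℝ} {H : Set C(K, ℝ)}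
    (hH : BoundedLipschitzClass R H) {f : C(K, ℝ)} {s : ℝ}
    (hs : barronNorm K H f < ENNReal.ofReal s) {ε : ℝ} (hε : 0 < ε) :
    ∃ (k : ℕ) (e : Fin k → ℝ) (g : Fin k → C(K, ℝ)),
      (∀ i, g i ∈ H) ∧ ∑ i, |e i| ≤ s ∧ ∀ x, |f x - reluSum e g x| ≤ ε := by
  have : CompactSpace K := isCompact_iff_compactSpace.1 hK
  obtain ⟨μp, μn, hrep, hmass⟩ := exists_isBarronRep_of_barronNorm_lt hs
  have hmass' : (μp univ + μn univ).toReal ≤ s := (ENNReal.toReal_lt_of_lt_ofReal hmass).le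
  have hs0 : 0 < s := ENNReal.ofReal_pos.1 (pos_of_gt hmass)
  set δ := ε / (3 * s)
  obtain ⟨T, hT⟩ := exists_finset_dist_lt (X := K) (show 0 < δ by positivity)
  set Φ := floorGrid T δ
  have hfin : (Φ '' H).Finite := finite_floorGrid_image (by positivity) T fun g hg => (hH g hg).1
  set S := hfin.toFinset
  set rep := Function.invFunOn Φ H
  have hS : ∀ g ∈ H, Φ g ∈ S := fun g hg => hfin.mem_toFinset.2 (mem_image_of_mem _ hg)
  have hrepS : ∀ g ∈ H, rep (Φ g) ∈ H ∧ Φ (rep (Φ g)) = Φ g := fun g hg =>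
    Function.invFunOn_pos ⟨g, hg, rfl⟩
  have hclose : ∀ g ∈ H, ∀ x, |g x - rep (Φ g) x| ≤ 3 * δ := fun g hg =>
    abs_sub_le_of_floorGrid_eq (by positivity) hT (hH g hg).2 (hH _ (hrepS g hg).1).2
      (hrepS g hg).2.symm
  set e := fun v => μp.real (Φ ⁻¹' {v}) - μn.real (Φ ⁻¹' {v})
  refine ⟨S.card, fun i => e (S.equivFin.symm i), fun i => rep (S.equivFin.symm i),
    fun i => ?_, ?_, fun x => ?_⟩
  · obtain ⟨g, hg, hgv⟩ := hfin.mem_toFinset.1 (S.equivFin.symm i).2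
    simpa only [← hgv] using (hrepS g hg).1
  · rw [sum_fin_equivFin_symm S fun v => |e v|]
    exact (hrep.sum_abs_sub_le (measurable_floorGrid T δ) hS).trans hmass'
  · rw [reluSum_apply, sum_fin_equivFin_symm S fun v => e v * relu (rep v x)]
    calc _ ≤ 3 * δ * (μp univ + μn univ).toReal :=
          hrep.abs_sub_sum_le hH (measurable_floorGrid T δ) hS hclose x
      _ ≤ 3 * δ * s := by gcongr
      _ = ε := by simp only [δ]; field_simp

section reluSum

variable {ι : Type*} [Fintype ι]

lemma abs_reluSum_le {R : ℝ} (e : ι → ℝ) {h : ι → C(K, ℝ)} {x : K} (hh : ∀ i, |h i x| ≤ R) :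
    |reluSum e h x| ≤ (∑ i, |e i|) * R := by
  rw [reluSum_apply, Finset.sum_mul]
  refine (Finset.abs_sum_le_sum_abs _ _).trans (Finset.sum_le_sum fun i _ => ?_)
  rw [abs_mul]
  exact mul_le_mul_of_nonneg_left ((abs_relu_le _).trans (hh i)) (abs_nonneg _)

lemma abs_reluSum_sub_reluSum_le {δ : ℝ} (e : ι → ℝ) {g h : ι → C(K, ℝ)} {x : K}
    (hgh : ∀ i, |h i x - g i x| ≤ δ) :
    |reluSum e h x - reluSum e g x| ≤ (∑ i, |e i|) * δ := by
  rw [reluSum_apply, reluSum_apply, ← Finset.sum_sub_distrib, Finset.sum_mul]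
  refine (Finset.abs_sum_le_sum_abs _ _).trans (Finset.sum_le_sum fun i _ => ?_)
  rw [← mul_sub, abs_mul]
  exact mul_le_mul_of_nonneg_left ((abs_relu_sub_relu_le _ _).trans (hgh i)) (abs_nonneg _)

lemma reluSum_const_mul (c : ℝ) (e : ι → ℝ) (h : ι → C(K, ℝ)) (x : K) :
    reluSum (fun i => c * e i) h x = c * reluSum e h x := by
  simp only [reluSum_apply, Finset.mul_sum, mul_assoc]

lemma abs_reluSum_const_mul_sub_le {R c : ℝ} (hc : c ≤ 1) (e : ι → ℝ) {h : ι → C(K, ℝ)} {x : K}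
    (hh : ∀ i, |h i x| ≤ R) :
    |reluSum (fun i => c * e i) h x - reluSum e h x| ≤ (1 - c) * ((∑ i, |e i|) * R) := by
  rw [reluSum_const_mul, show c * reluSum e h x - reluSum e h x = -((1 - c) * reluSum e h x) by
    ring, abs_neg, abs_mul, abs_of_nonneg (by linarith)]
  exact mul_le_mul_of_nonneg_left (abs_reluSum_le e hh) (by linarith)

end reluSum

lemma exists_reluSum_approx_of_dense (hK : IsCompact K) {R : ℝ} (hR1 : 1 ≤ R)
    (hR : ∀ x : K, ‖(x : Fin d → ℝ)‖ ≤ R) {ℓ : ℕ} (Q : C(K, ℝ) → Prop)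
    (hQ : ∀ g, treeNorm K ℓ g ≤ 1 → ∀ δ > 0,
      ∃ h, Q h ∧ treeNorm K ℓ h ≤ 1 ∧ ∀ x, |h x - g x| ≤ δ)
    {f : C(K, ℝ)} (hf : treeNorm K (ℓ + 1) f ≠ ⊤) {ε : ℝ} (hε : 0 < ε) :
    ∃ (k : ℕ) (e : Fin k → ℝ) (h : Fin k → C(K, ℝ)), (∀ i, Q (h i)) ∧
      treeNorm K (ℓ + 1) (reluSum e h) ≤ treeNorm K (ℓ + 1) f ∧
      ∀ x, |reluSum e h x - f x| ≤ ε := by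
  set t := (treeNorm K (ℓ + 1) f).toReal
  have hη : 0 < ε / (3 * R) := by positivity
  set s := t + ε / (3 * R)
  have ht : 0 ≤ t := ENNReal.toReal_nonneg
  have hs : 0 < s := by positivity
  have hfs : treeNorm K (ℓ + 1) f < ENNReal.ofReal s :=
    (ENNReal.lt_ofReal_iff_toReal_lt hf).2 (lt_add_of_pos_right t hη)
  obtain ⟨k, e, g, hg, hes, hfg⟩ := exists_reluSum_approx_of_barronNorm_lt hK
    (boundedLipschitzClass_unitBall hR1 hR ℓ) hfs (show 0 < ε / 3 by positivity)
  choose h hQh hh hhg using fun i => hQ (g i) (hg i) (ε / (3 * s)) (by positivity)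
  -- shrinking the coefficients by `t / s` restores the norm bound at a cost of `(s - t) R = ε / 3`
  set c := t / s
  have hc0 : 0 ≤ c := div_nonneg ht hs.le
  have hc1 : c ≤ 1 := div_le_one_of_le₀ (le_add_of_nonneg_right hη.le) hs.le
  refine ⟨k, fun i => c * e i, h, hQh, ?_, fun x => ?_⟩
  · refine (treeNorm_reluSum_le _ hh).trans ?_
    rw [← ENNReal.ofReal_toReal hf]
    refine ENNReal.ofReal_le_ofReal ?_
    calc ∑ i, |c * e i| = c * ∑ i, |e i| := by
          simp only [abs_mul, abs_of_nonneg hc0, Finset.mul_sum]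
      _ ≤ c * s := by gcongr
      _ = t := div_mul_cancel₀ t hs.ne'
  · have hhR : ∀ i, |h i x| ≤ R := fun i =>
      (boundedLipschitzClass_unitBall hR1 hR ℓ _ (hh i)).1 x
    have h1 : |reluSum (fun i => c * e i) h x - reluSum e h x| ≤ ε / 3 := by
      refine (abs_reluSum_const_mul_sub_le hc1 e hhR).trans ?_
      calc (1 - c) * ((∑ i, |e i|) * R) ≤ (1 - c) * (s * R) := by gcongr
        _ = ε / 3 := by simp only [c, s]; field_simp; ring
    have h2 : |reluSum e h x - reluSum e g x| ≤ ε / 3 :=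
      (abs_reluSum_sub_reluSum_le e fun i => hhg i x).trans <| by
        calc (∑ i, |e i|) * (ε / (3 * s)) ≤ s * (ε / (3 * s)) := by gcongr
          _ = ε / 3 := by field_simp
    have h3 : |reluSum e g x - f x| ≤ ε / 3 := by rw [abs_sub_comm]; exact hfg x
    linarith [abs_sub_le (reluSum (fun i => c * e i) h x) (reluSum e h x) (f x),
      abs_sub_le (reluSum e h x) (reluSum e g x) (f x)]

def IsAffine (g : C(K, ℝ)) : Prop :=
  ∃ (w : Fin d → ℝ) (b : ℝ), ∀ x : K, g x = (∑ i, w i * (x : Fin d → ℝ) i) + b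

lemma isAffine_of_treeNorm_zero_ne_top {g : C(K, ℝ)} (hg : treeNorm K 0 g ≠ ⊤) : IsAffine g := by
  obtain ⟨w, b, hwb, -⟩ := exists_affine_of_treeNorm_zero_lt hg.lt_top
  exact ⟨w, b, hwb⟩

def IsReluNet (L : ℕ) (g : C(K, ℝ)) : Prop :=
  ∃ (m : ℕ → ℕ) (c : ℕ → ℝ) (a : ℕ → ℕ → ℕ → ℝ), ∀ x : K, g x = netRealize d L m c a x

lemma isReluNet_one_reluSum {k : ℕ} (e : Fin k → ℝ) {h : Fin k → C(K, ℝ)}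
    (hh : ∀ i, IsAffine (h i)) : IsReluNet 1 (reluSum e h) := by
  choose w b hwb using hh
  refine ⟨fun _ => k, fun i => if hi : i < k then e ⟨i, hi⟩ else 0,
    fun _ i p => if hi : i < k then (if hp : p < d then w ⟨i, hi⟩ ⟨p, hp⟩ else b ⟨i, hi⟩) else 0,
    fun x => ?_⟩
  simp [netRealize, hiddenLayer, Finset.sum_range, hwb]

lemma sum_range_mul_ite {M : Type*} [AddCommMonoid M] {k W n i : ℕ} (hi : i < k) (hn : n ≤ W)
    (F : ℕ → M) :
    ∑ q ∈ Finset.range (k * W), (if q / W = i ∧ q % W < n then F q else 0) =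
      ∑ p ∈ Finset.range n, F (W * i + p) := by
  rw [← Finset.sum_filter]
  refine Finset.sum_nbij' (fun q => q % W) (fun p => W * i + p) ?_ ?_ ?_ ?_ ?_
  · intro q hq
    simp only [Finset.mem_filter, Finset.mem_range] at hq
    simpa using hq.2.2
  · intro p hp
    have hp : p < n := by simpa using hp
    have hW : 0 < W := by omega
    simp only [Finset.mem_filter, Finset.mem_range]
    refine ⟨by nlinarith, ?_⟩
    simp [Nat.mul_add_div hW, Nat.div_eq_of_lt (hp.trans_le hn), Nat.mod_eq_of_lt (hp.trans_le hn),
      hp]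
  · intro q hq
    simp only [Finset.mem_filter, Finset.mem_range] at hq
    rw [← hq.2.1]
    exact Nat.div_add_mod q W
  · intro p hp
    have hp : p < n := by simpa using hp
    simp [Nat.mod_eq_of_lt (hp.trans_le hn)]
  · intro q hq
    simp only [Finset.mem_filter, Finset.mem_range] at hq
    rw [← hq.2.1, Nat.div_add_mod q W]

def parallelWidth (k W L ℓ : ℕ) : ℕ := if ℓ ≤ L then k * W else k

/-- Weights of `k` networks run in parallel below a new top layer. In the hidden layers
`0, …, L - 1`, unit `j` plays unit `j % W` of network `j / W`, and units of different networks are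
not connected; the new top layer `L` feeds unit `i` from the output units of network `i`.
Padding units (those beyond a network's width) may be active, but no weight leaves them. -/
def parallelWeight (W L : ℕ) (ms : ℕ → ℕ → ℕ) (cs : ℕ → ℕ → ℝ) (ws : ℕ → ℕ → ℕ → ℕ → ℝ)
    (ℓ j p : ℕ) : ℝ :=
  if ℓ = 0 then ws (j / W) 0 (j % W) p
  else if ℓ < L then
    if p / W = j / W ∧ p % W < ms (j / W) ℓ then ws (j / W) ℓ (j % W) (p % W) else 0
  else if p / W = j ∧ p % W < ms j L then cs j (p % W) else 0

lemma mul_add_div_mod {W i j : ℕ} (hj : j < W) : (W * i + j) / W = i ∧ (W * i + j) % W = j :=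
  ⟨by rw [Nat.mul_add_div (by omega), Nat.div_eq_of_lt hj, add_zero],
    by rw [Nat.mul_comm, Nat.mul_add_mod_of_lt hj]⟩

section parallel

variable {k W L : ℕ} {ms : ℕ → ℕ → ℕ} {cs : ℕ → ℕ → ℝ} {ws : ℕ → ℕ → ℕ → ℕ → ℝ}

lemma hiddenLayer_parallel (hW : ∀ i < k, ∀ ℓ ≤ L, ms i ℓ ≤ W) (x : Fin d → ℝ) {ℓ : ℕ}
    (hℓ : ℓ < L) {i j : ℕ} (hi : i < k) (hj : j < W) :
    hiddenLayer d (parallelWidth k W L) (parallelWeight W L ms cs ws) x ℓ (W * i + j) =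
      hiddenLayer d (ms i) (ws i) x ℓ j := by
  induction ℓ generalizing j with
  | zero => simp [hiddenLayer, parallelWeight, mul_add_div_mod hj]
  | succ ℓ ih =>
    obtain ⟨hdiv, hmod⟩ := mul_add_div_mod (i := i) hj
    simp only [hiddenLayer, parallelWidth, parallelWeight, if_pos hℓ.le, if_neg ℓ.succ_ne_zero,
      if_pos hℓ, hdiv, hmod, ite_mul, zero_mul]
    rw [sum_range_mul_ite hi (hW i hi _ hℓ.le)]
    refine congrArg relu (Finset.sum_congr rfl fun p hp => ?_)
    have hpW : p < W := (Finset.mem_range.1 hp).trans_le (hW i hi _ hℓ.le)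
    rw [(mul_add_div_mod hpW).2, ih (by omega) hpW]

lemma netRealize_parallel (hL : 1 ≤ L) (hW : ∀ i < k, ∀ ℓ ≤ L, ms i ℓ ≤ W) (e : ℕ → ℝ)
    (x : Fin d → ℝ) :
    netRealize d (L + 1) (parallelWidth k W L) e (parallelWeight W L ms cs ws) x =
      ∑ i ∈ Finset.range k, e i * relu (netRealize d L (ms i) (cs i) (ws i) x) := by
  obtain ⟨L, rfl⟩ : ∃ L', L = L' + 1 := ⟨L - 1, by omega⟩
  simp only [netRealize, hiddenLayer, parallelWidth, parallelWeight, add_tsub_cancel_right,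
    if_neg (Nat.not_succ_le_self (L + 1)), le_refl, if_true, if_neg L.succ_ne_zero,
    lt_irrefl, if_false, ite_mul, zero_mul]
  refine Finset.sum_congr rfl fun i hi => ?_
  have hi : i < k := Finset.mem_range.1 hi
  rw [sum_range_mul_ite hi (hW i hi _ le_rfl)]
  refine congrArg (e i * relu ·) (Finset.sum_congr rfl fun p hp => ?_)
  have hpW : p < W := (Finset.mem_range.1 hp).trans_le (hW i hi _ le_rfl)
  rw [(mul_add_div_mod hpW).2, hiddenLayer_parallel hW x (Nat.lt_succ_self L) hi hpW]

end parallel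

lemma isReluNet_succ_reluSum {L k : ℕ} (hL : 1 ≤ L) (e : Fin k → ℝ) {h : Fin k → C(K, ℝ)}
    (hh : ∀ i, IsReluNet L (h i)) : IsReluNet (L + 1) (reluSum e h) := by
  choose m c a hmca using hh
  obtain ⟨W, hW⟩ := Finite.exists_le fun p : Fin k × Fin (L + 1) => m p.1 p.2
  refine ⟨parallelWidth k W L, fun i => if hi : i < k then e ⟨i, hi⟩ else 0,
    parallelWeight W L (fun i => if hi : i < k then m ⟨i, hi⟩ else 0)
      (fun i => if hi : i < k then c ⟨i, hi⟩ else 0)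
      (fun i => if hi : i < k then a ⟨i, hi⟩ else 0), fun x => ?_⟩
  rw [netRealize_parallel hL (fun i hi ℓ hℓ => ?_)]
  · simp [Finset.sum_range, hmca]
  · simpa [hi] using hW (⟨i, hi⟩, ⟨ℓ, Nat.lt_succ_of_le hℓ⟩)

lemma exists_isReluNet_approx (hK : IsCompact K) {R : ℝ} (hR1 : 1 ≤ R)
    (hR : ∀ x : K, ‖(x : Fin d → ℝ)‖ ≤ R) (l : ℕ) {f : C(K, ℝ)} (hf : treeNorm K (l + 1) f ≠ ⊤)
    {ε : ℝ} (hε : 0 < ε) :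
    ∃ G : C(K, ℝ), IsReluNet (l + 1) G ∧ treeNorm K (l + 1) G ≤ treeNorm K (l + 1) f ∧
      ∀ x, |G x - f x| ≤ ε := by
  induction l generalizing f ε with
  | zero =>
    obtain ⟨k, e, h, hQ, hnorm, herr⟩ := exists_reluSum_approx_of_dense hK hR1 hR IsAffine
      (fun g hg δ hδ => ⟨g, isAffine_of_treeNorm_zero_ne_top (ne_top_of_le_ne_top
        ENNReal.one_ne_top hg), hg, fun x => by simpa using hδ.le⟩) hf hε
    exact ⟨_, isReluNet_one_reluSum e hQ, hnorm, herr⟩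
  | succ l ih =>
    obtain ⟨k, e, h, hQ, hnorm, herr⟩ := exists_reluSum_approx_of_dense hK hR1 hR
      (IsReluNet (l + 1)) (fun g hg δ hδ => by
        obtain ⟨G, hG, hGn, hGe⟩ := ih (ne_top_of_le_ne_top ENNReal.one_ne_top hg) hδ
        exact ⟨G, hG, hGn.trans hg, hGe⟩) hf hε
    exact ⟨_, isReluNet_succ_reluSum (by omega) e hQ, hnorm, herr⟩

lemma le_rpow_mul_rpow_of_le {a p q α : ℝ} (ha : 0 ≤ a) (hα0 : 0 ≤ α) (hα1 : α ≤ 1)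
    (hp : a ≤ p) (hq : a ≤ q) : a ≤ p ^ (1 - α) * q ^ α :=
  calc a = a ^ (1 - α) * a ^ α := by
        rw [← Real.rpow_add' ha (by norm_num), sub_add_cancel, Real.rpow_one]
    _ ≤ p ^ (1 - α) * q ^ α :=
        mul_le_mul (Real.rpow_le_rpow ha hp (by linarith)) (Real.rpow_le_rpow ha hq hα0)
          (Real.rpow_nonneg ha _) (Real.rpow_nonneg (ha.trans hp) _)

lemma holderNorm_le {α s : ℝ} (hα : α ∈ Ioo (0 : ℝ) 1) {u : K → ℝ} (hs : ∀ x, |u x| ≤ s)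
    {C : ℝ≥0} (hu : LipschitzWith C u) :
    holderNorm K α u ≤ ENNReal.ofReal s + ENNReal.ofReal ((2 * s) ^ (1 - α) * (C : ℝ) ^ α) := by
  refine add_le_add (iSup_le fun x => ?_) (iSup₂_le fun x y => ?_)
  · rw [← enorm_eq_nnnorm, ← ofReal_norm]
    exact ENNReal.ofReal_le_ofReal (hs x)
  split_ifs with hxy
  · exact zero_le
  refine ENNReal.div_le_of_le_mul ?_
  have hs0 : 0 ≤ s := (abs_nonneg _).trans (hs x)
  have hreal : |u x - u y| ≤ (2 * s) ^ (1 - α) * (C : ℝ) ^ α * dist x y ^ α := by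
    rw [mul_assoc, ← Real.mul_rpow (NNReal.coe_nonneg C) dist_nonneg]
    refine le_rpow_mul_rpow_of_le (abs_nonneg _) hα.1.le hα.2.le ?_ ?_
    · linarith [abs_sub (u x) (u y), hs x, hs y]
    · simpa [Real.dist_eq] using hu.dist_le_mul x y
  rw [← enorm_eq_nnnorm, ← ofReal_norm, edist_dist,
    ENNReal.ofReal_rpow_of_nonneg dist_nonneg hα.1.le, ← ENNReal.ofReal_mul (by positivity)]
  exact ENNReal.ofReal_le_ofReal hreal

lemma tendsto_holderNorm_zero {ι : Type*} {l : Filter ι} {α : ℝ} (hα : α ∈ Ioo (0 : ℝ) 1)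
    {u : ι → K → ℝ} {s : ι → ℝ} {C : ℝ≥0} (hs : Tendsto s l (𝓝 0))
    (hsu : ∀ i x, |u i x| ≤ s i) (hu : ∀ i, LipschitzWith C (u i)) :
    Tendsto (fun i => holderNorm K α (u i)) l (𝓝 0) := by
  have hlim : Tendsto (fun i => ENNReal.ofReal (s i) +
      ENNReal.ofReal ((2 * s i) ^ (1 - α) * (C : ℝ) ^ α)) l (𝓝 0) := by
    have hpow : Tendsto (fun i => (2 * s i) ^ (1 - α)) l (𝓝 0) := by
      simpa [Real.zero_rpow (sub_ne_zero.2 hα.2.ne')] using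
        (hs.const_mul 2).rpow_const (Or.inr (sub_nonneg.2 hα.2.le))
    simpa using (ENNReal.tendsto_ofReal hs).add (ENNReal.tendsto_ofReal (hpow.mul_const _))
  exact tendsto_of_tendsto_of_tendsto_of_le_of_le tendsto_const_nhds hlim (fun _ => zero_le)
    fun i => holderNorm_le hα (hsu i) (hu i)

end

/-- For every compact `K ⊆ ℝ^d`, `L ≥ 1` and `f ∈ W^L(K)`, there is a
sequence of finite ReLU networks `f_n` with `L` hidden layers such that
`‖f_n‖_{W^L(K)} ≤ ‖f‖_{W^L(K)}` for all `n` and `f_n → f` in `C^{0,α}(K)` for every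
`α < 1`. -/
theorem direct_approximation_holder {d : ℕ} (K : Set (Fin d → ℝ)) (hK : IsCompact K)
    (L : ℕ) (hL : 1 ≤ L) (F : C(K, ℝ)) (hF : treeNorm K L F ≠ ⊤) :
    ∃ (m : ℕ → ℕ → ℕ) (c : ℕ → ℕ → ℝ) (a : ℕ → ℕ → ℕ → ℕ → ℝ) (G : ℕ → C(K, ℝ)),
      (∀ n, ∀ x : K, G n x = netRealize d L (m n) (c n) (a n) (x : Fin d → ℝ)) ∧
      (∀ n, treeNorm K L (G n) ≤ treeNorm K L F) ∧
      ∀ α ∈ Set.Ioo (0 : ℝ) 1,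
        Tendsto (fun n => holderNorm K α (fun x : K => G n x - F x)) atTop (𝓝 0) := by
  obtain ⟨l, rfl⟩ : ∃ l, L = l + 1 := ⟨L - 1, by omega⟩
  obtain ⟨R, hR⟩ := hK.isBounded.exists_norm_le
  have hR1 : 1 ≤ max R 1 := le_max_right R 1
  have hRK : ∀ x : K, ‖(x : Fin d → ℝ)‖ ≤ max R 1 := fun x => (hR x x.2).trans (le_max_left R 1)
  choose G hGnet hGnorm hGerr using fun n : ℕ =>
    exists_isReluNet_approx hK hR1 hRK l hF (show (0 : ℝ) < 1 / ((n : ℝ) + 1) by positivity)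
  choose m c a hG using hGnet
  have hlip : ∀ n, LipschitzWith (2 * (treeNorm K (l + 1) F).toNNReal) fun x => G n x - F x :=
    fun n => by
      have hGF := ((treeNorm_bounds hR1 hRK (l + 1) (ne_top_of_le_ne_top hF (hGnorm n))).2.weaken
        (ENNReal.toNNReal_mono hF (hGnorm n))).sub (treeNorm_bounds hR1 hRK (l + 1) hF).2
      rwa [← two_mul] at hGF
  exact ⟨m, c, a, G, hG, hGnorm, fun α hα =>
    tendsto_holderNorm_zero hα tendsto_one_div_add_atTop_nhds_zero_nat hGerr hlip⟩
end

section
/- Let H be a real Hilbert space, T > 0, let a : [0,T] → H be continuously differentiable, and let R : [0,T] → [0,∞) be differentiable with R′(t) ≤ −‖a′(t)‖²_H for all t ∈ [0,T]. Then for all t ∈ [0,T], ‖a(t)‖_H ≤ ‖a(0)‖_H + √(R(0)) · t^{1/2}. -/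
/-! Integrating the dissipation inequality gives `∫₀ᵗ ‖a'‖² ≤ R 0 - R t ≤ R 0`, while by
the fundamental theorem of calculus and Cauchy–Schwarz
`‖a t‖ - ‖a 0‖ ≤ ∫₀ᵗ ‖a'‖ ≤ √t · (∫₀ᵗ ‖a'‖²)^{1/2}`. -/

open MeasureTheory Set

theorem HasDerivWithinAt.hasDerivWithinAt_Ioi {E : Type*} [NormedAddCommGroup E]
    [NormedSpace ℝ E] {f : ℝ → E} {f' : E} {a b x : ℝ} (h : HasDerivWithinAt f f' (Icc a b) x)
    (hx : x ∈ Ioo a b) : HasDerivWithinAt f f' (Ioi x) x :=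
  (h.hasDerivAt (Icc_mem_nhds hx.1 hx.2)).hasDerivWithinAt

theorem integral_le_sqrt_measureReal_mul_sqrt_integral_sq {α : Type*} [MeasurableSpace α]
    {μ : Measure α} [IsFiniteMeasure μ] {f : α → ℝ} (hf_nonneg : 0 ≤ᵐ[μ] f) (hf : MemLp f 2 μ) :
    ∫ x, f x ∂μ ≤ √(μ.real univ) * √(∫ x, f x ^ 2 ∂μ) := by
  have holder := integral_mul_le_Lp_mul_Lq_of_nonneg Real.HolderConjugate.two_two hf_nonneg
    (ae_of_all μ fun _ => zero_le_one) (by simpa using hf) (memLp_const (1 : ℝ))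
  simp only [mul_one, Real.one_rpow, integral_const, smul_eq_mul, ← Real.sqrt_eq_rpow] at holder
  norm_cast at holder
  rwa [mul_comm] at holder

namespace intervalIntegral

variable {a b : ℝ}

theorem integral_le_sqrt_mul_sqrt_integral_sq {g : ℝ → ℝ} (hab : a ≤ b)
    (hg : ContinuousOn g (Icc a b)) (hg_nonneg : ∀ x ∈ Icc a b, 0 ≤ g x) :
    ∫ x in a..b, g x ≤ √(b - a) * √(∫ x in a..b, g x ^ 2) := by
  have hg2 : MemLp g 2 (volume.restrict (Icc a b)) :=
    (memLp_two_iff_integrable_sq (hg.aestronglyMeasurable measurableSet_Icc)).2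
      ((hg.pow 2).integrableOn_Icc)
  have := integral_le_sqrt_measureReal_mul_sqrt_integral_sq
    ((ae_restrict_iff' measurableSet_Icc).2 (ae_of_all _ hg_nonneg)) hg2
  rw [measureReal_restrict_apply_univ, Real.volume_real_Icc_of_le hab] at this
  rwa [integral_of_le hab, integral_of_le hab, ← integral_Icc_eq_integral_Ioc,
    ← integral_Icc_eq_integral_Ioc]

theorem norm_le_norm_add_integral_norm_deriv {E : Type*} [NormedAddCommGroup E] [NormedSpace ℝ E]
    [CompleteSpace E] {f f' : ℝ → E} (hab : a ≤ b)
    (hf : ∀ x ∈ Icc a b, HasDerivWithinAt f (f' x) (Icc a b) x) (hf' : ContinuousOn f' (Icc a b)) :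
    ‖f b‖ ≤ ‖f a‖ + ∫ x in a..b, ‖f' x‖ := by
  have hftc : ∫ x in a..b, f' x = f b - f a :=
    integral_eq_sub_of_hasDeriv_right_of_le hab (fun x hx => (hf x hx).continuousWithinAt)
      (fun x hx => (hf x (Ioo_subset_Icc_self hx)).hasDerivWithinAt_Ioi hx)
      (hf'.intervalIntegrable_of_Icc hab)
  calc ‖f b‖ ≤ ‖f a‖ + ‖f b - f a‖ := norm_le_insert' _ _
    _ ≤ ‖f a‖ + ∫ x in a..b, ‖f' x‖ := by
      rw [← hftc]; gcongr; exact norm_integral_le_integral_norm hab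

theorem integral_le_sub_of_deriv_le_neg {R R' g : ℝ → ℝ} (hab : a ≤ b)
    (hR : ∀ x ∈ Icc a b, HasDerivWithinAt R (R' x) (Icc a b) x) (hg : ContinuousOn g (Icc a b))
    (hR'g : ∀ x ∈ Ioo a b, R' x ≤ -g x) :
    ∫ x in a..b, g x ≤ R a - R b := by
  have := sub_le_integral_of_hasDeriv_right_of_le hab (fun x hx => (hR x hx).continuousWithinAt)
    (fun x hx => (hR x (Ioo_subset_Icc_self hx)).hasDerivWithinAt_Ioi hx)
    hg.neg.integrableOn_Icc hR'g
  simp only [Pi.neg_apply, integral_neg] at this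
  linarith

end intervalIntegral

open intervalIntegral in
theorem weight_growth_under_dissipation_general {H : Type*} [NormedAddCommGroup H]
    [InnerProductSpace ℝ H] [CompleteSpace H]
    (T : ℝ) (a a' : ℝ → H) (R R' : ℝ → ℝ)
    (ha : ∀ t ∈ Set.Icc (0 : ℝ) T, HasDerivWithinAt a (a' t) (Set.Icc (0 : ℝ) T) t)
    (ha' : ContinuousOn a' (Set.Icc (0 : ℝ) T))
    (hR : ∀ t ∈ Set.Icc (0 : ℝ) T, HasDerivWithinAt R (R' t) (Set.Icc (0 : ℝ) T) t)
    (hRnn : ∀ t ∈ Set.Icc (0 : ℝ) T, 0 ≤ R t)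
    (hdiss : ∀ t ∈ Set.Icc (0 : ℝ) T, R' t ≤ -‖a' t‖ ^ 2) :
    ∀ t ∈ Set.Icc (0 : ℝ) T, ‖a t‖ ≤ ‖a 0‖ + Real.sqrt (R 0) * Real.sqrt t := by
  intro t ht
  have hsub : Icc 0 t ⊆ Icc 0 T := Icc_subset_Icc_right ht.2
  have hspeed : ContinuousOn (fun x => ‖a' x‖) (Icc 0 t) := (ha'.mono hsub).norm
  have henergy : ∫ x in 0..t, ‖a' x‖ ^ 2 ≤ R 0 :=
    (integral_le_sub_of_deriv_le_neg ht.1 (fun x hx => (hR x (hsub hx)).mono hsub) (hspeed.pow 2)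
      fun x hx => hdiss x (hsub (Ioo_subset_Icc_self hx))).trans (sub_le_self _ (hRnn t ht))
  calc ‖a t‖ ≤ ‖a 0‖ + ∫ x in 0..t, ‖a' x‖ :=
        norm_le_norm_add_integral_norm_deriv ht.1 (fun x hx => (ha x (hsub hx)).mono hsub)
          (ha'.mono hsub)
    _ ≤ ‖a 0‖ + √t * √(∫ x in 0..t, ‖a' x‖ ^ 2) := by
        gcongr
        simpa using integral_le_sqrt_mul_sqrt_integral_sq ht.1 hspeed fun _ _ => norm_nonneg _
    _ ≤ ‖a 0‖ + √(R 0) * √t := by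
        rw [mul_comm]
        gcongr

/-- **Polynomial growth of weight norms under gradient flow.**
Let `H` be a real Hilbert space, `T > 0`, `a : [0,T] → H` continuously differentiable
with derivative `a'`, and `R : [0,T] → [0,∞)` differentiable with derivative `R'`
satisfying the energy dissipation bound `R'(t) ≤ −‖a'(t)‖²`.  Then
`‖a(t)‖ ≤ ‖a(0)‖ + √(R(0)) · t^{1/2}` for all `t ∈ [0,T]`. -/
theorem weight_growth_under_dissipation {H : Type*} [NormedAddCommGroup H]
    [InnerProductSpace ℝ H] [CompleteSpace H]
    (T : ℝ) (hT : 0 < T) (a a' : ℝ → H) (R R' : ℝ → ℝ)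
    (ha : ∀ t ∈ Set.Icc (0 : ℝ) T, HasDerivWithinAt a (a' t) (Set.Icc (0 : ℝ) T) t)
    (ha' : ContinuousOn a' (Set.Icc (0 : ℝ) T))
    (hR : ∀ t ∈ Set.Icc (0 : ℝ) T, HasDerivWithinAt R (R' t) (Set.Icc (0 : ℝ) T) t)
    (hRnn : ∀ t ∈ Set.Icc (0 : ℝ) T, 0 ≤ R t)
    (hdiss : ∀ t ∈ Set.Icc (0 : ℝ) T, R' t ≤ -‖a' t‖ ^ 2) :
    ∀ t ∈ Set.Icc (0 : ℝ) T, ‖a t‖ ≤ ‖a 0‖ + Real.sqrt (R 0) * Real.sqrt t :=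
  weight_growth_under_dissipation_general T a a' R R' ha ha' hR hRnn hdiss
end
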